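/- Let d ≥ 1 be an integer and δ ∈ (0,1/2). There exists a constant C (depending only on d and δ) such that for all μ > 0: ∫_{ℝ×ℝ^d} min(‖w‖^{−d}, μ^{−d}) · ρ(‖w‖)² dw ≤ C · min(1, μ^{−d}). -/

import Mathlib

open Real MeasureTheory ENNReal

/-- Space-time `ℝ × ℝ^d`. -/
abbrev SpaceTime (d : ℕ) := ℝ × EuclideanSpace ℝ (Fin d)

/-- The parabolic norm `‖(t,x)‖ = (|x|⁴ + t²)^{1/4}`. -/
noncomputable def pnorm {d : ℕ} (z : SpaceTime d) : ℝ :=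
  (‖z.2‖ ^ 4 + z.1 ^ 2) ^ ((1 : ℝ) / 4)

/-- `ρ(r)² = min (r^{-(1-2δ)}) (r^{-(d+2)-2δ})`. -/
noncomputable def rhoSq (d : ℕ) (δ r : ℝ) : ℝ :=
  min (r ^ (-(1 - 2 * δ))) (r ^ (-((d : ℝ) + 2) - 2 * δ))

/-!
The parabolic ball `{‖w‖ < r}` lies in the box `(-r², r²) × B(0, r)`, so its volume is
`O(r^{d+2})`. By the layer-cake formula, `min (‖w‖^{-a}) (‖w‖^{-b})` is therefore integrable
over space-time as soon as `0 < a < d + 2 < b`. Bounding `min (‖w‖^{-d}) (μ^{-d})` once by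
`μ^{-d}` and once by `‖w‖^{-d}` reduces the two bounds `C μ^{-d}` and `C` to this with
`(a, b) = (1 - 2δ, d + 2 + 2δ)` and `(a, b) = (d + 1 - 2δ, 2d + 2 + 2δ)` respectively.
-/

open Set Metric

section ParabolicNorm

variable {d : ℕ}

lemma pnorm_nonneg (w : SpaceTime d) : 0 ≤ pnorm w :=
  rpow_nonneg (by positivity) _

lemma continuous_pnorm : Continuous (pnorm (d := d)) :=
  (by fun_prop : Continuous fun w : SpaceTime d => ‖w.2‖ ^ 4 + w.1 ^ 2).rpow_const
    fun _ => Or.inr (by norm_num)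

lemma mem_Ioo_prod_ball_of_pnorm_lt {r : ℝ} {w : SpaceTime d} (h : pnorm w < r) :
    w ∈ Ioo (-r ^ 2) (r ^ 2) ×ˢ ball 0 r := by
  have hr : 0 ≤ r := (pnorm_nonneg w).trans h.le
  have h4 : ‖w.2‖ ^ 4 + w.1 ^ 2 < r ^ 4 := by
    have := (rpow_inv_lt_iff_of_pos (x := ‖w.2‖ ^ 4 + w.1 ^ 2) (by positivity) hr
      (by norm_num : (0 : ℝ) < 4)).mp (by rw [← one_div]; exact h)
    exact_mod_cast this
  refine ⟨abs_lt.mp (lt_of_pow_lt_pow_left₀ 2 (by positivity) ?_), ?_⟩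
  · rw [sq_abs]; nlinarith [pow_nonneg (norm_nonneg w.2) 4]
  · exact mem_ball_zero_iff.mpr (lt_of_pow_lt_pow_left₀ 4 hr (by nlinarith [sq_nonneg w.1]))

lemma volume_setOf_pnorm_lt_le {r : ℝ} (hr : 0 < r) :
    volume {w : SpaceTime d | pnorm w < r}
      ≤ ENNReal.ofReal (2 * r ^ ((d : ℝ) + 2)) * volume (ball (0 : EuclideanSpace ℝ (Fin d)) 1) :=
  calc volume {w : SpaceTime d | pnorm w < r}
      ≤ volume (Ioo (-r ^ 2) (r ^ 2) ×ˢ ball (0 : EuclideanSpace ℝ (Fin d)) r) :=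
        measure_mono fun _ => mem_Ioo_prod_ball_of_pnorm_lt
    _ = ENNReal.ofReal (2 * r ^ ((d : ℝ) + 2))
          * volume (ball (0 : EuclideanSpace ℝ (Fin d)) 1) := by
        rw [Measure.volume_eq_prod, Measure.prod_prod, Real.volume_Ioo, sub_neg_eq_add,
          Measure.addHaar_ball_of_pos _ _ hr, finrank_euclideanSpace_fin, ← mul_assoc,
          ← ENNReal.ofReal_mul (by positivity), rpow_add hr, Real.rpow_natCast, Real.rpow_two]
        congr 2
        ring

lemma volume_setOf_lt_pnorm_rpow_neg_le {a s : ℝ} (ha : 0 < a) (hs : 0 < s) :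
    volume {w : SpaceTime d | s < pnorm w ^ (-a)}
      ≤ ENNReal.ofReal (2 * s ^ (-((d : ℝ) + 2) / a))
          * volume (ball (0 : EuclideanSpace ℝ (Fin d)) 1) := by
  have hsub : {w : SpaceTime d | s < pnorm w ^ (-a)} ⊆ {w | pnorm w < s ^ (-a)⁻¹} := by
    intro w (hw : s < pnorm w ^ (-a))
    rcases (pnorm_nonneg w).eq_or_lt with h0 | hpos
    · rw [← h0, zero_rpow (by simpa using ha.ne')] at hw
      exact absurd hs hw.not_gt
    · exact (lt_rpow_inv_iff_of_neg hpos hs (by linarith)).mpr hw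
  calc volume {w : SpaceTime d | s < pnorm w ^ (-a)}
      ≤ volume {w : SpaceTime d | pnorm w < s ^ (-a)⁻¹} := measure_mono hsub
    _ ≤ _ := volume_setOf_pnorm_lt_le (rpow_pos_of_pos hs _)
    _ = _ := by
        rw [← rpow_mul hs.le, inv_neg, neg_mul, neg_div, div_eq_inv_mul]

theorem lintegral_min_rpow_neg_pnorm_lt_top {a b : ℝ} (ha : 0 < a) (hab : a < d + 2)
    (hb : d + 2 < b) :
    ∫⁻ w : SpaceTime d, ENNReal.ofReal (min (pnorm w ^ (-a)) (pnorm w ^ (-b))) < ⊤ := by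
  set B := volume (ball (0 : EuclideanSpace ℝ (Fin d)) 1)
  have hb0 : 0 < b := by linarith
  have hf : Measurable fun w : SpaceTime d => min (pnorm w ^ (-a)) (pnorm w ^ (-b)) :=
    (continuous_pnorm.measurable.pow_const _).min (continuous_pnorm.measurable.pow_const _)
  have hIoc : IntegrableOn (fun s : ℝ => 2 * s ^ (-((d : ℝ) + 2) / b)) (Ioc 0 1) :=
    ((intervalIntegrable_iff_integrableOn_Ioc_of_le zero_le_one).mp
      (intervalIntegral.intervalIntegrable_rpow' (by
        rw [neg_div, neg_lt_neg_iff, div_lt_one hb0]; exact hb))).const_mul 2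
  have hIoi : IntegrableOn (fun s : ℝ => 2 * s ^ (-((d : ℝ) + 2) / a)) (Ioi 1) :=
    (integrableOn_Ioi_rpow_of_lt (by
      rw [neg_div, neg_lt_neg_iff, one_lt_div ha]; exact hab) one_pos).const_mul 2
  rw [lintegral_eq_lintegral_meas_lt _ (.of_forall fun w => by
      exact le_min (rpow_nonneg (pnorm_nonneg w) _) (rpow_nonneg (pnorm_nonneg w) _))
    hf.aemeasurable, ← Ioc_union_Ioi_eq_Ioi zero_le_one,
    lintegral_union measurableSet_Ioi (Ioc_disjoint_Ioi le_rfl)]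
  calc (∫⁻ s in Ioc 0 1, volume {w : SpaceTime d | s < min (pnorm w ^ (-a)) (pnorm w ^ (-b))})
        + ∫⁻ s in Ioi 1, volume {w : SpaceTime d | s < min (pnorm w ^ (-a)) (pnorm w ^ (-b))}
      ≤ (∫⁻ s in Ioc 0 1, ENNReal.ofReal (2 * s ^ (-((d : ℝ) + 2) / b)) * B)
          + ∫⁻ s in Ioi 1, ENNReal.ofReal (2 * s ^ (-((d : ℝ) + 2) / a)) * B := by
        refine add_le_add (setLIntegral_mono' measurableSet_Ioc fun s hs => ?_)
          (setLIntegral_mono' measurableSet_Ioi fun s hs => ?_)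
        · refine le_trans (measure_mono ?_) (volume_setOf_lt_pnorm_rpow_neg_le hb0 hs.1)
          exact fun w (hw : s < min _ _) => (lt_min_iff.mp hw).2
        · refine le_trans (measure_mono ?_)
            (volume_setOf_lt_pnorm_rpow_neg_le ha (zero_lt_one.trans hs))
          exact fun w (hw : s < min _ _) => (lt_min_iff.mp hw).1
    _ < ⊤ := by
        have hB : B ≠ ⊤ := measure_ball_lt_top.ne
        rw [lintegral_mul_const' _ _ hB, lintegral_mul_const' _ _ hB]
        exact add_lt_top.mpr ⟨mul_lt_top hIoc.lintegral_lt_top hB.lt_top,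
          mul_lt_top hIoi.lintegral_lt_top hB.lt_top⟩

end ParabolicNorm

section Rho

variable {d : ℕ} {δ : ℝ}

lemma rhoSq_nonneg {r : ℝ} (hr : 0 ≤ r) : 0 ≤ rhoSq d δ r :=
  le_min (rpow_nonneg hr _) (rpow_nonneg hr _)

lemma rpow_neg_mul_rhoSq_le (hδ : 0 < δ) {r : ℝ} (hr : 0 ≤ r) :
    r ^ (-(d : ℝ)) * rhoSq d δ r
      ≤ min (r ^ (-((d : ℝ) + (1 - 2 * δ)))) (r ^ (-((d : ℝ) + (d + 2 + 2 * δ)))) := by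
  rcases hr.eq_or_lt with rfl | hr
  · have hρ : rhoSq d δ 0 = 0 :=
      le_antisymm ((min_le_right _ _).trans_eq (zero_rpow (by linarith))) (rhoSq_nonneg le_rfl)
    rw [hρ, mul_zero]
    exact le_min (rpow_nonneg le_rfl _) (rpow_nonneg le_rfl _)
  · rw [rhoSq, mul_min_of_nonneg _ _ (rpow_nonneg hr.le _), ← rpow_add hr, ← rpow_add hr]
    apply le_of_eq
    congr 2 <;> ring

lemma lintegral_rhoSq_pnorm_lt_top (hδ : δ ∈ Ioo 0 (1 / 2)) :
    ∫⁻ w : SpaceTime d, ENNReal.ofReal (rhoSq d δ (pnorm w)) < ⊤ := by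
  have h := lintegral_min_rpow_neg_pnorm_lt_top (d := d) (a := 1 - 2 * δ) (b := d + 2 + 2 * δ)
    (by linarith [hδ.2]) (by linarith [hδ.1]) (by linarith [hδ.1])
  simpa only [rhoSq, neg_add, sub_eq_add_neg] using h

end Rho

lemma ENNReal.le_ofReal_max_mul_min_one {x : ℝ≥0∞} {A B m : ℝ} (hm : 0 ≤ m)
    (hA : x ≤ ENNReal.ofReal (A * m)) (hB : x ≤ ENNReal.ofReal B) :
    x ≤ ENNReal.ofReal (max A B * min 1 m) := by
  rcases le_total m 1 with h | h
  · rw [min_eq_right h]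
    exact hA.trans (ofReal_le_ofReal (mul_le_mul_of_nonneg_right (le_max_left _ _) hm))
  · rw [min_eq_left h, mul_one]
    exact hB.trans (ofReal_le_ofReal (le_max_right _ _))

theorem stmt11_general (d : ℕ) (δ : ℝ) (hδ : δ ∈ Set.Ioo (0 : ℝ) (1 / 2)) :
    ∃ C : ℝ, ∀ μ : ℝ, 0 < μ →
      ∫⁻ w : SpaceTime d,
          ENNReal.ofReal
            (min (pnorm w ^ (-(d : ℝ))) (μ ^ (-(d : ℝ))) * rhoSq d δ (pnorm w))
        ≤ ENNReal.ofReal (C * min 1 (μ ^ (-(d : ℝ)))) := by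
  set I₁ := ∫⁻ w : SpaceTime d, ENNReal.ofReal (rhoSq d δ (pnorm w))
  set I₂ := ∫⁻ w : SpaceTime d, ENNReal.ofReal
    (min (pnorm w ^ (-((d : ℝ) + (1 - 2 * δ)))) (pnorm w ^ (-((d : ℝ) + (d + 2 + 2 * δ)))))
  have hI₁ : I₁ ≠ ⊤ := (lintegral_rhoSq_pnorm_lt_top hδ).ne
  have hI₂ : I₂ ≠ ⊤ := (lintegral_min_rpow_neg_pnorm_lt_top (by linarith [hδ.2])
    (by linarith [hδ.1]) (by linarith [hδ.1])).ne
  refine ⟨max I₁.toReal I₂.toReal, fun μ hμ => ?_⟩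
  have hμd : 0 ≤ μ ^ (-(d : ℝ)) := rpow_nonneg hμ.le _
  refine ENNReal.le_ofReal_max_mul_min_one hμd ?_ ?_
  · calc _ ≤ ∫⁻ w : SpaceTime d,
            ENNReal.ofReal (μ ^ (-(d : ℝ))) * ENNReal.ofReal (rhoSq d δ (pnorm w)) := by
          refine lintegral_mono fun w => ?_
          rw [← ENNReal.ofReal_mul hμd]
          exact ofReal_le_ofReal (mul_le_mul_of_nonneg_right (min_le_right _ _)
            (rhoSq_nonneg (pnorm_nonneg w)))
      _ = ENNReal.ofReal (I₁.toReal * μ ^ (-(d : ℝ))) := by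
          rw [lintegral_const_mul' _ _ ofReal_ne_top, mul_comm, ENNReal.ofReal_mul toReal_nonneg,
            ofReal_toReal hI₁]
  · calc _ ≤ I₂ := lintegral_mono fun w => ofReal_le_ofReal <|
          (mul_le_mul_of_nonneg_right (min_le_left _ _) (rhoSq_nonneg (pnorm_nonneg w))).trans
            (rpow_neg_mul_rhoSq_le hδ.1 (pnorm_nonneg w))
      _ = ENNReal.ofReal I₂.toReal := (ofReal_toReal hI₂).symm

theorem stmt11 (d : ℕ) (hd : 1 ≤ d) (δ : ℝ) (hδ : δ ∈ Set.Ioo (0 : ℝ) (1 / 2)) :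
    ∃ C : ℝ, ∀ μ : ℝ, 0 < μ →
      ∫⁻ w : SpaceTime d,
          ENNReal.ofReal
            (min (pnorm w ^ (-(d : ℝ))) (μ ^ (-(d : ℝ))) * rhoSq d δ (pnorm w))
        ≤ ENNReal.ofReal (C * min 1 (μ ^ (-(d : ℝ)))) :=
  stmt11_general d δ hδ
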